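/- arXiv:math/0603344 — 2 statements merged into one kernel-verified Lean document; each statement's English description precedes it below -/
import Mathlib

section
/- Law of large numbers for the number of deep traps on the complete graph: Let α ∈ (0,1), 0 < κ < 1/α and 0 < ε < M < ∞. For u ≤ v define T_u^v(n) = {x ∈ {1,…,n} : τ_x/n^κ ∈ [u,v)}. Then there exists a function h(n) with h(n) → 0 as n → ∞ such that, almost surely, lim_{n→∞} sup_{u ∈ [ε,M) ∩ (ℤ/h(n))} | |T_u^{u+h(n)}(n)| / (h(n) n^{1−ακ}) − α u^{−α−1} | = 0. -/
/-!
Write `F s = P[τ₀ ≥ s]` and `c = 1 - ακ > 0`. The expected number of traps with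
`τₓ / n^κ ∈ [u, u + h)` is `n (F (u n^κ) - F ((u + h) n^κ))`. Since `s^α F s = 1 + O(e n)`
uniformly on `s ≥ ε n^κ` with `e n → 0`, this count divided by `h n^c` is the difference quotient
of `u ↦ u^(-α)` up to `O(e n / h)`, hence within `O(h + e n / h)` of `α u^(-α-1)`.
Taking `h = max (√(e n)) ((n + 1)^(-c/2))` kills this error while keeping the expected counts
of order at least `n^(c/2)`. A Chernoff bound then makes a relative deviation `t` of one count
cost probability `exp (-const · n^(c/2))`; this stays summable after a union bound over the
`O(1 / h)` grid points, and Borel–Cantelli concludes.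
-/

open MeasureTheory ProbabilityTheory Filter Set Real

lemma exists_rpow_neg_sub_rpow_neg_eq (γ : ℝ) {a b : ℝ} (ha : 0 < a) (hab : a < b) :
    ∃ ξ ∈ Ioo a b, a ^ (-γ) - b ^ (-γ) = γ * ξ ^ (-γ - 1) * (b - a) := by
  obtain ⟨ξ, hξ, hslope⟩ := exists_hasDerivAt_eq_slope (fun x : ℝ => x ^ (-γ))
    (fun x => -γ * x ^ (-γ - 1)) hab
    (continuousOn_id.rpow_const fun x hx => Or.inl (ha.trans_le hx.1).ne')
    (fun x hx => by simpa using hasDerivAt_rpow_const (p := -γ) (Or.inl (ha.trans hx.1).ne'))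
  refine ⟨ξ, hξ, ?_⟩
  rw [eq_div_iff (sub_ne_zero.mpr hab.ne')] at hslope
  linarith

lemma abs_rpow_neg_slope_sub_le {α ε u H : ℝ} (hα : 0 ≤ α) (hε : 0 < ε) (hu : ε ≤ u)
    (hH : 0 < H) :
    |(u ^ (-α) - (u + H) ^ (-α)) / H - α * u ^ (-α - 1)| ≤ α * (α + 1) * ε ^ (-α - 2) * H := by
  have hu0 : 0 < u := hε.trans_le hu
  obtain ⟨ξ, ⟨huξ, hξH⟩, hξ⟩ := exists_rpow_neg_sub_rpow_neg_eq α hu0 (lt_add_of_pos_right u hH)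
  obtain ⟨ζ, ⟨huζ, -⟩, hζ⟩ := exists_rpow_neg_sub_rpow_neg_eq (α + 1) hu0 huξ
  rw [show -(α + 1) = -α - 1 by ring, show -α - 1 - 1 = -α - 2 by ring] at hζ
  have hslope : (u ^ (-α) - (u + H) ^ (-α)) / H - α * u ^ (-α - 1)
      = -(α * ((α + 1) * ζ ^ (-α - 2) * (ξ - u))) := by
    rw [hξ, ← hζ]; field_simp; ring
  have hζε : ζ ^ (-α - 2) ≤ ε ^ (-α - 2) :=
    rpow_le_rpow_of_nonpos hε (hu.trans huζ.le) (by linarith)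
  have hnonneg : 0 ≤ α * ((α + 1) * ζ ^ (-α - 2) * (ξ - u)) :=
    mul_nonneg hα (mul_nonneg (mul_nonneg (by linarith) (rpow_nonneg (hu0.trans huζ).le _))
      (sub_nonneg.mpr huξ.le))
  rw [hslope, abs_neg, abs_of_nonneg hnonneg]
  calc α * ((α + 1) * ζ ^ (-α - 2) * (ξ - u)) ≤ α * ((α + 1) * ε ^ (-α - 2) * H) := by
        gcongr
        linarith
    _ = α * (α + 1) * ε ^ (-α - 2) * H := by ring

lemma abs_slope_sub_le_of_abs_sub_rpow_neg_le {G : ℝ → ℝ} {α ε u H δ : ℝ} (hα : 0 ≤ α)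
    (hε : 0 < ε) (hu : ε ≤ u) (hH : 0 < H)
    (hGu : |G u - u ^ (-α)| ≤ δ) (hGuH : |G (u + H) - (u + H) ^ (-α)| ≤ δ) :
    |(G u - G (u + H)) / H - α * u ^ (-α - 1)| ≤
      α * (α + 1) * ε ^ (-α - 2) * H + 2 * δ / H := by
  have happrox : |(G u - G (u + H)) / H - (u ^ (-α) - (u + H) ^ (-α)) / H| ≤ 2 * δ / H := by
    rw [← sub_div, abs_div, abs_of_pos hH]
    gcongr
    calc |G u - G (u + H) - (u ^ (-α) - (u + H) ^ (-α))|
        = |(G u - u ^ (-α)) - (G (u + H) - (u + H) ^ (-α))| := by ring_nf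
      _ ≤ δ + δ := (abs_sub _ _).trans (add_le_add hGu hGuH)
      _ = 2 * δ := by ring
  have := abs_rpow_neg_slope_sub_le hα hε hu hH
  calc _ ≤ _ := abs_sub_le _ ((u ^ (-α) - (u + H) ^ (-α)) / H) _
    _ ≤ _ := by linarith

lemma abs_rpow_mul_sub_rpow_neg_le {α ε w L y e : ℝ} (hα : 0 ≤ α) (hε : 0 < ε) (hw : ε ≤ w)
    (hL : 0 < L) (he : |(w * L) ^ α * y - 1| ≤ e) :
    |L ^ α * y - w ^ (-α)| ≤ ε ^ (-α) * e := by
  have hw0 : 0 < w := hε.trans_le hw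
  have hfactor : L ^ α * y - w ^ (-α) = w ^ (-α) * ((w * L) ^ α * y - 1) := by
    rw [mul_rpow hw0.le hL.le, rpow_neg hw0.le]
    field_simp [(rpow_pos_of_pos hw0 α).ne']
  rw [hfactor, abs_mul, abs_of_pos (rpow_pos_of_pos hw0 _)]
  exact mul_le_mul (rpow_le_rpow_of_nonpos hε hw (by linarith)) he (abs_nonneg _)
    (rpow_nonneg hε.le _)

lemma abs_mean_count_sub_le {F : ℝ → ℝ} {α κ ε x e u H : ℝ} (hα : 0 ≤ α) (hε : 0 < ε)
    (hx : 0 < x) (hH : 0 < H) (hF : ∀ s, ε * x ^ κ ≤ s → |s ^ α * F s - 1| ≤ e) (hu : ε ≤ u) :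
    |x * (F (u * x ^ κ) - F ((u + H) * x ^ κ)) / (H * x ^ (1 - α * κ)) - α * u ^ (-α - 1)| ≤
      α * (α + 1) * ε ^ (-α - 2) * H + 2 * (ε ^ (-α) * e) / H := by
  have hxκ : 0 < x ^ κ := rpow_pos_of_pos hx κ
  set G : ℝ → ℝ := fun w => (x ^ κ) ^ α * F (w * x ^ κ)
  have hG : ∀ w, ε ≤ w → |G w - w ^ (-α)| ≤ ε ^ (-α) * e := fun w hw =>
    abs_rpow_mul_sub_rpow_neg_le hα hε hw hxκ (hF _ (by gcongr))
  have hx_split : x = x ^ (1 - α * κ) * (x ^ κ) ^ α := by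
    rw [← rpow_mul hx.le, ← rpow_add hx]; ring_nf; exact (rpow_one x).symm
  have hmean : x * (F (u * x ^ κ) - F ((u + H) * x ^ κ)) / (H * x ^ (1 - α * κ))
      = (G u - G (u + H)) / H := by
    have hxc : 0 < x ^ (1 - α * κ) := rpow_pos_of_pos hx _
    set xc := x ^ (1 - α * κ)
    set L := x ^ κ
    rw [hx_split]
    field_simp
    simp only [G, L]
    ring_nf
  rw [hmean]
  exact abs_slope_sub_le_of_abs_sub_rpow_neg_le hα hε hu hH (hG u hu) (hG _ (by linarith))

lemma tendstoUniformlyOn_mean_count {F : ℝ → ℝ} {α κ ε : ℝ} (hα : 0 ≤ α) (hε : 0 < ε)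
    {e h : ℕ → ℝ} (hpos : ∀ n, 0 < h n) (hh : Tendsto h atTop (nhds 0))
    (heh : Tendsto (fun n => e n / h n) atTop (nhds 0))
    (hF : ∀ᶠ n : ℕ in atTop, ∀ s, ε * (n : ℝ) ^ κ ≤ s → |s ^ α * F s - 1| ≤ e n) :
    TendstoUniformlyOn (fun (n : ℕ) u => n * (F (u * (n : ℝ) ^ κ) - F ((u + h n) * (n : ℝ) ^ κ)) /
      (h n * (n : ℝ) ^ (1 - α * κ))) (fun u => α * u ^ (-α - 1)) atTop (Ici ε) := by
  have herror : Tendsto (fun n => α * (α + 1) * ε ^ (-α - 2) * h n + 2 * (ε ^ (-α) * e n) / h n)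
      atTop (nhds 0) := by
    have := (hh.const_mul (α * (α + 1) * ε ^ (-α - 2))).add (heh.const_mul (2 * ε ^ (-α)))
    simp only [mul_zero, add_zero] at this
    refine this.congr fun n => ?_
    ring
  rw [Metric.tendstoUniformlyOn_iff]
  intro δ hδ
  filter_upwards [hF, herror.eventually (gt_mem_nhds hδ), eventually_gt_atTop 0]
    with n hFn hsmall hn u hu
  rw [dist_comm, Real.dist_eq]
  exact (abs_mean_count_sub_le hα hε (Nat.cast_pos.mpr hn) (hpos n) hFn hu).trans_lt hsmall

lemma eventually_le_mul_of_tendstoUniformlyOn {ι β : Type*} {l : Filter ι} {S : Set β}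
    {m : ι → β → ℝ} {g : ι → ℝ} {φ : β → ℝ} {B : ℝ}
    (hm : TendstoUniformlyOn (fun i u => m i u / g i) φ l S) (hφ : ∀ u ∈ S, φ u ≤ B)
    (hg : ∀ᶠ i in l, 0 < g i) : ∀ᶠ i in l, ∀ u ∈ S, m i u ≤ (B + 1) * g i := by
  filter_upwards [Metric.tendstoUniformlyOn_iff.mp hm 1 one_pos, hg] with i hi hgi u hu
  have hclose := hi u hu
  rw [Real.dist_eq, abs_sub_lt_iff] at hclose
  rw [← div_le_iff₀ hgi]
  linarith [hφ u hu]

lemma abs_div_sub_lt_add {N m g φ t s : ℝ} (hg : 0 < g) (hN : |N - m| < t * g)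
    (hm : |m / g - φ| < s) : |N / g - φ| < t + s := by
  have hN' : |N / g - m / g| < t := by
    rwa [← sub_div, abs_div, abs_of_pos hg, div_lt_iff₀ hg]
  calc |N / g - φ| ≤ |N / g - m / g| + |m / g - φ| := abs_sub_le _ _ _
    _ < t + s := add_lt_add hN' hm

lemma exists_tendsto_zero_forall_ge_abs_le {f : ℝ → ℝ} (hf : Tendsto f atTop (nhds 0))
    {g : ℕ → ℝ} (hg : Tendsto g atTop atTop) :
    ∃ e : ℕ → ℝ, (∀ n, 0 ≤ e n) ∧ Tendsto e atTop (nhds 0) ∧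
      ∀ᶠ n in atTop, ∀ s, g n ≤ s → |f s| ≤ e n := by
  -- truncating at `1` keeps the suprema finite and is harmless once `e n < 1`
  set e : ℕ → ℝ := fun n => sSup ((fun s => min |f s| 1) '' Ici (g n))
  have hbdd : ∀ n, BddAbove ((fun s => min |f s| 1) '' Ici (g n)) :=
    fun n => ⟨1, by rintro _ ⟨s, -, rfl⟩; exact min_le_right _ _⟩
  have hle : ∀ n s, g n ≤ s → min |f s| 1 ≤ e n := fun n s hs => le_csSup (hbdd n) ⟨s, hs, rfl⟩
  have he0 : ∀ n, 0 ≤ e n := fun n => (le_min (abs_nonneg _) zero_le_one).trans (hle n _ le_rfl)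
  have he : Tendsto e atTop (nhds 0) := by
    rw [Metric.tendsto_atTop]
    intro δ hδ
    have habs : Tendsto (fun s => |f s|) atTop (nhds 0) := by simpa using hf.abs
    obtain ⟨s₀, hs₀⟩ := eventually_atTop.mp (habs.eventually (gt_mem_nhds (half_pos hδ)))
    obtain ⟨N, hN⟩ := eventually_atTop.mp (hg.eventually_ge_atTop s₀)
    refine ⟨N, fun n hn => ?_⟩
    have : e n ≤ δ / 2 := csSup_le ⟨_, g n, self_mem_Ici, rfl⟩ <| by
      rintro _ ⟨s, hs, rfl⟩
      exact (min_le_left _ _).trans (hs₀ s ((hN n hn).trans hs)).le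
    rw [Real.dist_eq, sub_zero, abs_of_nonneg (he0 n)]
    linarith
  refine ⟨e, he0, he, ?_⟩
  filter_upwards [he.eventually (gt_mem_nhds one_pos)] with n hn s hs
  have := hle n s hs
  rw [min_def] at this
  split_ifs at this <;> linarith

lemma tendsto_sSup_of_forall_eventually_le {ι : Type*} {l : Filter ι} {S : ι → Set ℝ}
    (hS : ∀ i, ∀ v ∈ S i, 0 ≤ v) (hle : ∀ δ > 0, ∀ᶠ i in l, ∀ v ∈ S i, v ≤ δ) :
    Tendsto (fun i => sSup (S i)) l (nhds 0) := by
  refine tendsto_order.2 ⟨fun a ha => Eventually.of_forall fun i =>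
    ha.trans_le (Real.sSup_nonneg (hS i)), fun a ha => ?_⟩
  filter_upwards [hle (a / 2) (half_pos ha)] with i hi
  exact (Real.sSup_le hi (half_pos ha).le).trans_lt (half_lt_self ha)

lemma summable_rpow_mul_exp_neg_mul_rpow (p : ℝ) {b γ : ℝ} (hb : 0 < b) (hγ : 0 < γ) :
    Summable fun n : ℕ => (n : ℝ) ^ p * exp (-b * (n : ℝ) ^ γ) := by
  have hdecay : Tendsto (fun n : ℕ => (n : ℝ) ^ (p + 2) * exp (-b * (n : ℝ) ^ γ))
      atTop (nhds 0) := by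
    have := (tendsto_rpow_mul_exp_neg_mul_atTop_nhds_zero ((p + 2) / γ) b hb).comp
      ((tendsto_rpow_atTop hγ).comp tendsto_natCast_atTop_atTop)
    refine this.congr fun n => ?_
    simp only [Function.comp_apply]
    rw [← rpow_mul n.cast_nonneg, mul_div_cancel₀ _ hγ.ne']
  refine summable_of_isBigO_nat (summable_nat_rpow.mpr (by norm_num : (-2 : ℝ) < -1)) ?_
  refine Asymptotics.IsBigO.of_bound 1 ?_
  filter_upwards [hdecay.eventually (eventually_le_nhds one_pos), eventually_gt_atTop 0]
    with n hn hn0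
  have hn0' : (0 : ℝ) < n := Nat.cast_pos.mpr hn0
  have hsplit : (n : ℝ) ^ p = (n : ℝ) ^ (-2 : ℝ) * (n : ℝ) ^ (p + 2) := by
    rw [← rpow_add hn0']; ring_nf
  rw [norm_of_nonneg (by positivity), norm_of_nonneg (by positivity), hsplit, mul_assoc]
  have := rpow_pos_of_pos hn0' (-2 : ℝ)
  nlinarith

lemma card_Ico_ceil_le {a : ℝ} (ha : 0 ≤ a) (b : ℝ) :
    ((Finset.Ico ⌈a⌉ ⌈b⌉).card : ℝ) ≤ |b| + 1 := by
  rw [Int.card_Ico]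
  rcases le_or_gt (⌈b⌉ - ⌈a⌉) 0 with hle | hpos
  · rw [Int.toNat_of_nonpos hle, Nat.cast_zero]; positivity
  · have hcast : (((⌈b⌉ - ⌈a⌉).toNat : ℕ) : ℝ) = (⌈b⌉ : ℝ) - ⌈a⌉ := by
      rw [← Int.cast_natCast, Int.toNat_of_nonneg hpos.le]; push_cast; ring
    have ha' : (0 : ℝ) ≤ ⌈a⌉ := by exact_mod_cast Int.ceil_nonneg ha
    rw [hcast]
    linarith [Int.ceil_lt_add_one b, le_abs_self b]

lemma mem_Ico_ceil_div_iff {ε M h : ℝ} (hh : 0 < h) (k : ℤ) :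
    k ∈ Finset.Ico ⌈ε / h⌉ ⌈M / h⌉ ↔ ε ≤ k * h ∧ k * h < M := by
  rw [Finset.mem_Ico, Int.ceil_le, Int.lt_ceil, div_le_iff₀ hh, lt_div_iff₀ hh]

/-- `mesh e c n ≥ √(e n)` makes the tail error `e n / mesh e c n` vanish, and
`mesh e c n ≥ (n + 1) ^ (-c / 2)` keeps the expected counts `mesh e c n * n ^ c` polynomially
large. -/
noncomputable def mesh (e : ℕ → ℝ) (c : ℝ) (n : ℕ) : ℝ :=
  max (Real.sqrt (e n)) (((n : ℝ) + 1) ^ (-(c / 2)))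

section Mesh

variable {e : ℕ → ℝ} {c : ℝ}

lemma rpow_le_mesh (e : ℕ → ℝ) (c : ℝ) (n : ℕ) : ((n : ℝ) + 1) ^ (-(c / 2)) ≤ mesh e c n :=
  le_max_right _ _

lemma mesh_pos (e : ℕ → ℝ) (c : ℝ) (n : ℕ) : 0 < mesh e c n :=
  (rpow_pos_of_pos (by positivity) _).trans_le (rpow_le_mesh e c n)

lemma tendsto_mesh (he : Tendsto e atTop (nhds 0)) (hc : 0 < c) :
    Tendsto (mesh e c) atTop (nhds 0) := by
  have hsqrt : Tendsto (fun n => Real.sqrt (e n)) atTop (nhds 0) := by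
    simpa using he.sqrt
  have hpow : Tendsto (fun n : ℕ => ((n : ℝ) + 1) ^ (-(c / 2))) atTop (nhds 0) :=
    (tendsto_rpow_neg_atTop (by positivity)).comp
      (tendsto_atTop_add_const_right _ 1 tendsto_natCast_atTop_atTop)
  have hmax := hsqrt.max hpow
  rwa [max_self] at hmax

lemma tendsto_div_mesh (he0 : ∀ n, 0 ≤ e n) (he : Tendsto e atTop (nhds 0)) :
    Tendsto (fun n => e n / mesh e c n) atTop (nhds 0) := by
  have hsqrt : Tendsto (fun n => Real.sqrt (e n)) atTop (nhds 0) := by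
    simpa using he.sqrt
  refine squeeze_zero (fun n => div_nonneg (he0 n) (mesh_pos e c n).le) (fun n => ?_) hsqrt
  rw [div_le_iff₀ (mesh_pos e c n)]
  calc e n = Real.sqrt (e n) * Real.sqrt (e n) := (Real.mul_self_sqrt (he0 n)).symm
    _ ≤ Real.sqrt (e n) * mesh e c n := by gcongr; exact le_max_left _ _

lemma inv_mesh_le (n : ℕ) : (mesh e c n)⁻¹ ≤ ((n : ℝ) + 1) ^ (c / 2) := by
  rw [inv_le_comm₀ (mesh_pos e c n) (by positivity), ← rpow_neg (by positivity)]
  exact rpow_le_mesh e c n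

lemma rpow_le_mesh_mul_rpow (hc : 0 ≤ c) {n : ℕ} (hn : 1 ≤ n) :
    2 ^ (-c) * ((n : ℝ) + 1) ^ (c / 2) ≤ mesh e c n * (n : ℝ) ^ c := by
  have hn' : (1 : ℝ) ≤ n := by exact_mod_cast hn
  have hsplit : ((n : ℝ) + 1) ^ (-(c / 2)) * ((n : ℝ) + 1) ^ c = ((n : ℝ) + 1) ^ (c / 2) := by
    rw [← rpow_add (by positivity)]; ring_nf
  calc 2 ^ (-c) * ((n : ℝ) + 1) ^ (c / 2)
      = ((n : ℝ) + 1) ^ (-(c / 2)) * (((n : ℝ) + 1) ^ c / 2 ^ c) := by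
        rw [← hsplit, rpow_neg (by norm_num)]; ring
    _ = ((n : ℝ) + 1) ^ (-(c / 2)) * (((n : ℝ) + 1) / 2) ^ c := by
        rw [div_rpow (by positivity) (by norm_num)]
    _ ≤ mesh e c n * (n : ℝ) ^ c :=
        mul_le_mul (rpow_le_mesh e c n) (rpow_le_rpow (by positivity) (by linarith) hc)
          (by positivity) (mesh_pos e c n).le

end Mesh

lemma summable_card_Ico_ceil_div_mesh_mul_exp {e : ℕ → ℝ} {c ε : ℝ}
    (he : Tendsto e atTop (nhds 0)) (hc : 0 < c) (hε : 0 ≤ ε) (M : ℝ) {b : ℝ} (hb : 0 < b) :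
    Summable fun n => ((Finset.Ico ⌈ε / mesh e c n⌉ ⌈M / mesh e c n⌉).card : ℝ) *
      exp (-b * (mesh e c n * (n : ℝ) ^ c)) := by
  have hdom : Summable fun n : ℕ =>
      (|M| + 1) * (((n : ℝ) + 1) ^ (c / 2) * exp (-(b * 2 ^ (-c)) * ((n : ℝ) + 1) ^ (c / 2))) := by
    refine Summable.mul_left _ ?_
    have := (summable_nat_add_iff 1).mpr
      (summable_rpow_mul_exp_neg_mul_rpow (c / 2) (by positivity : 0 < b * 2 ^ (-c))
        (half_pos hc))
    simpa using this
  refine hdom.of_norm_bounded_eventually_nat ?_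
  filter_upwards [eventually_ge_atTop 1,
    (tendsto_mesh he hc).eventually (eventually_le_nhds one_pos)] with n hn hmesh
  have hpos := mesh_pos e c n
  have hcard : ((Finset.Ico ⌈ε / mesh e c n⌉ ⌈M / mesh e c n⌉).card : ℝ) ≤
      (|M| + 1) * ((n : ℝ) + 1) ^ (c / 2) := calc
    _ ≤ |M / mesh e c n| + 1 := card_Ico_ceil_le (div_nonneg hε hpos.le) _
    _ ≤ (|M| + 1) * (mesh e c n)⁻¹ := by
        rw [abs_div, abs_of_pos hpos, div_eq_mul_inv, add_mul, one_mul]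
        gcongr
        exact one_le_inv_iff₀.mpr ⟨hpos, hmesh⟩
    _ ≤ (|M| + 1) * ((n : ℝ) + 1) ^ (c / 2) := by gcongr; exact inv_mesh_le n
  have hexp : exp (-b * (mesh e c n * (n : ℝ) ^ c)) ≤
      exp (-(b * 2 ^ (-c)) * ((n : ℝ) + 1) ^ (c / 2)) := by
    have := mul_le_mul_of_nonneg_left (rpow_le_mesh_mul_rpow (e := e) hc.le hn) hb.le
    exact exp_le_exp.mpr (by linarith)
  rw [norm_of_nonneg (by positivity)]
  exact (mul_le_mul hcard hexp (exp_pos _).le (by positivity)).trans_eq (mul_assoc _ _ _)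

lemma ProbabilityTheory.iIndepFun.iIndepSet_preimage {Ω ι β : Type*} [MeasurableSpace Ω]
    [MeasurableSpace β] {μ : Measure Ω} {X : ι → Ω → β} (h : iIndepFun X μ) {B : Set β}
    (hB : MeasurableSet B) : iIndepSet (fun i => X i ⁻¹' B) μ :=
  iIndep_comap_mem_iff.mp (h.comp (fun _ => (· ∈ B)) fun _ => measurable_mem.mpr hB)

lemma measureReal_preimage_Ico {Ω : Type*} [MeasurableSpace Ω] {μ : Measure Ω}
    [IsFiniteMeasure μ] {X : Ω → ℝ} (hX : Measurable X) {a b : ℝ} (hab : a ≤ b) :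
    μ.real (X ⁻¹' Ico a b) = μ.real {ω | a ≤ X ω} - μ.real {ω | b ≤ X ω} := by
  have hdiff : X ⁻¹' Ico a b = {ω | a ≤ X ω} \ {ω | b ≤ X ω} := by
    ext ω; simp
  rw [hdiff, measureReal_sdiff (ofPred_subset_ofPred.mpr fun ω h => hab.trans h)
    (hX measurableSet_Ici)]

lemma ae_eventually_notMem_of_summable_measureReal {Ω : Type*} [MeasurableSpace Ω]
    {μ : Measure Ω} [IsFiniteMeasure μ] {s : ℕ → Set Ω}
    (hs : Summable fun n => μ.real (s n)) : ∀ᵐ ω ∂μ, ∀ᶠ n in atTop, ω ∉ s n := by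
  refine ae_eventually_notMem ?_
  rw [tsum_congr fun n => (ofReal_measureReal (μ := μ) (s := s n)).symm,
    ← ENNReal.ofReal_tsum_of_nonneg (fun n => measureReal_nonneg) hs]
  exact ENNReal.ofReal_ne_top

lemma exp_mul_indicator_one {Ω : Type*} (A : Set Ω) (t : ℝ) :
    (fun ω => exp (t * A.indicator (fun _ => (1 : ℝ)) ω))
      = fun ω => A.indicator (fun _ => exp t - 1) ω + 1 := by
  ext ω
  by_cases hω : ω ∈ A <;> simp [hω]

lemma card_filter_mem_eq_sum_indicator {Ω β : Type*} (A : β → Set Ω)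
    [∀ ω, DecidablePred fun x => ω ∈ A x] (s : Finset β) :
    (fun ω => ((s.filter fun x => ω ∈ A x).card : ℝ))
      = ∑ x ∈ s, (A x).indicator fun _ => (1 : ℝ) := by
  ext ω
  simp [Finset.sum_apply, Set.indicator_apply]

section Chernoff

variable {Ω : Type*} [MeasurableSpace Ω] {μ : Measure Ω} [IsProbabilityMeasure μ]

lemma integrable_exp_mul_indicator_one {A : Set Ω} (hA : MeasurableSet A) (t : ℝ) :
    Integrable (fun ω => exp (t * A.indicator (fun _ => (1 : ℝ)) ω)) μ := by
  rw [exp_mul_indicator_one]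
  exact ((integrable_const _).indicator hA).add (integrable_const 1)

lemma mgf_indicator_one {A : Set Ω} (hA : MeasurableSet A) (t : ℝ) :
    mgf (A.indicator fun _ => (1 : ℝ)) μ t = 1 + μ.real A * (exp t - 1) := by
  rw [mgf, exp_mul_indicator_one, integral_add ((integrable_const _).indicator hA)
    (integrable_const 1), integral_indicator_const _ hA]
  simp only [smul_eq_mul, integral_const, probReal_univ]
  ring

lemma mgf_card_filter_mem_le {β : Type*} {A : β → Set Ω}
    [∀ ω, DecidablePred fun x => ω ∈ A x] (hA : ∀ x, MeasurableSet (A x))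
    (hind : iIndepSet A μ) (s : Finset β) {t : ℝ} (ht : |t| ≤ 1) :
    mgf (fun ω => ((s.filter fun x => ω ∈ A x).card : ℝ)) μ t ≤
      exp (t * ∑ x ∈ s, μ.real (A x) + (∑ x ∈ s, μ.real (A x)) * t ^ 2) := by
  rw [card_filter_mem_eq_sum_indicator, hind.iIndepFun_indicator.mgf_sum
    (fun x => measurable_const.indicator (hA x)), Finset.sum_mul, Finset.mul_sum,
    ← Finset.sum_add_distrib, exp_sum]
  refine Finset.prod_le_prod (fun x _ => mgf_nonneg) fun x _ => ?_
  rw [mgf_indicator_one (hA x)]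
  have hquad : exp t - 1 ≤ t + t ^ 2 := by
    linarith [(abs_le.mp (abs_exp_sub_one_sub_id_le ht)).2]
  calc 1 + μ.real (A x) * (exp t - 1) ≤ exp (μ.real (A x) * (exp t - 1)) := by
        linarith [add_one_le_exp (μ.real (A x) * (exp t - 1))]
    _ ≤ exp (t * μ.real (A x) + μ.real (A x) * t ^ 2) := by
        gcongr
        nlinarith [measureReal_nonneg (μ := μ) (s := A x)]

theorem measureReal_le_abs_card_filter_mem_sub_le {β : Type*} {A : β → Set Ω}
    [∀ ω, DecidablePred fun x => ω ∈ A x]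
    (hA : ∀ x, MeasurableSet (A x)) (hind : iIndepSet A μ) (s : Finset β)
    {lam a : ℝ} (hlam0 : 0 ≤ lam) (hlam1 : lam ≤ 1) :
    μ.real {ω | a ≤ |((s.filter fun x => ω ∈ A x).card : ℝ) - ∑ x ∈ s, μ.real (A x)|} ≤
      2 * exp ((∑ x ∈ s, μ.real (A x)) * lam ^ 2 - lam * a) := by
  set m := ∑ x ∈ s, μ.real (A x)
  set N : Ω → ℝ := fun ω => ((s.filter fun x => ω ∈ A x).card : ℝ)
  have hint : ∀ t, Integrable (fun ω => exp (t * N ω)) μ := fun t => by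
    simp only [N, card_filter_mem_eq_sum_indicator]
    exact hind.iIndepFun_indicator.integrable_exp_mul_sum
      (fun x => measurable_const.indicator (hA x))
      fun x _ => integrable_exp_mul_indicator_one (hA x) t
  have hupper : μ.real {ω | m + a ≤ N ω} ≤ exp (m * lam ^ 2 - lam * a) := by
    calc _ ≤ exp (-lam * (m + a)) * mgf N μ lam := measure_ge_le_exp_mul_mgf _ hlam0 (hint lam)
      _ ≤ exp (-lam * (m + a)) * exp (lam * m + m * lam ^ 2) := by
          gcongr
          exact mgf_card_filter_mem_le hA hind s (by rwa [abs_of_nonneg hlam0])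
      _ = exp (m * lam ^ 2 - lam * a) := by rw [← exp_add]; ring_nf
  have hlower : μ.real {ω | N ω ≤ m - a} ≤ exp (m * lam ^ 2 - lam * a) := by
    calc _ ≤ exp (-(-lam) * (m - a)) * mgf N μ (-lam) :=
          measure_le_le_exp_mul_mgf _ (by linarith) (hint (-lam))
      _ ≤ exp (-(-lam) * (m - a)) * exp (-lam * m + m * (-lam) ^ 2) := by
          gcongr
          exact mgf_card_filter_mem_le hA hind s (by rwa [abs_neg, abs_of_nonneg hlam0])
      _ = exp (m * lam ^ 2 - lam * a) := by rw [← exp_add]; ring_nf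
  calc _ ≤ μ.real ({ω | m + a ≤ N ω} ∪ {ω | N ω ≤ m - a}) := by
        refine measureReal_mono fun ω (hω : a ≤ |N ω - m|) => ?_
        rcases le_abs'.mp hω with h | h
        exacts [Or.inr (by linarith : N ω ≤ m - a), Or.inl (by linarith : m + a ≤ N ω)]
    _ ≤ _ := measureReal_union_le _ _
    _ ≤ _ := by linarith

theorem measureReal_le_abs_card_filter_mem_sub_le_exp {β : Type*} {A : β → Set Ω}
    [∀ ω, DecidablePred fun x => ω ∈ A x]
    (hA : ∀ x, MeasurableSet (A x)) (hind : iIndepSet A μ) (s : Finset β)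
    {lam a B : ℝ} (hlam0 : 0 ≤ lam) (hlam1 : lam ≤ 1) (hmean : ∑ x ∈ s, μ.real (A x) ≤ B)
    (hBa : 2 * B * lam ≤ a) :
    μ.real {ω | a ≤ |((s.filter fun x => ω ∈ A x).card : ℝ) - ∑ x ∈ s, μ.real (A x)|} ≤
      2 * exp (-(lam * a / 2)) := by
  refine (measureReal_le_abs_card_filter_mem_sub_le hA hind s hlam0 hlam1).trans ?_
  gcongr
  nlinarith [mul_le_mul_of_nonneg_right hmean (sq_nonneg lam)]

/-- Chernoff and a union bound over `K n` make the bad events summable; then Borel–Cantelli. -/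
theorem ae_eventually_forall_abs_card_filter_mem_sub_lt {ι β : Type*} {K : ℕ → Finset ι}
    {s : ℕ → Finset β} {A : ℕ → ι → β → Set Ω} [∀ n k ω, DecidablePred fun x => ω ∈ A n k x]
    {g : ℕ → ℝ} {C : ℝ}
    (hA : ∀ n k x, MeasurableSet (A n k x)) (hind : ∀ n k, iIndepSet (A n k) μ) (hC : 0 < C)
    (hmean : ∀ᶠ n in atTop, ∀ k ∈ K n, ∑ x ∈ s n, μ.real (A n k x) ≤ C * g n)
    (hsum : ∀ b > 0, Summable fun n => ((K n).card : ℝ) * exp (-b * g n)) :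
    ∀ᵐ ω ∂μ, ∀ t > 0, ∀ᶠ n in atTop, ∀ k ∈ K n,
      |(((s n).filter fun x => ω ∈ A n k x).card : ℝ) - ∑ x ∈ s n, μ.real (A n k x)| <
        t * g n := by
  have hfixed : ∀ t > 0, ∀ᵐ ω ∂μ, ∀ᶠ n in atTop, ∀ k ∈ K n,
      |(((s n).filter fun x => ω ∈ A n k x).card : ℝ) - ∑ x ∈ s n, μ.real (A n k x)| <
        t * g n := by
    intro t ht
    set lam := min 1 (t / (2 * C))
    have hlam : 0 < lam := lt_min one_pos (by positivity)
    have hClam : 2 * C * lam ≤ t := calc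
      2 * C * lam ≤ 2 * C * (t / (2 * C)) := by gcongr; exact min_le_right _ _
      _ = t := by field_simp
    have hbad : ∀ᶠ n in atTop, μ.real (⋃ k ∈ K n, {ω | t * g n ≤
        |(((s n).filter fun x => ω ∈ A n k x).card : ℝ) - ∑ x ∈ s n, μ.real (A n k x)|}) ≤
          2 * (((K n).card : ℝ) * exp (-(lam * t / 2) * g n)) := by
      filter_upwards [hmean] with n hn
      refine (measureReal_biUnion_finset_le _ _).trans ?_
      calc _ ≤ ∑ _k ∈ K n, 2 * exp (-(lam * t / 2) * g n) := Finset.sum_le_sum fun k hk => ?_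
        _ = _ := by rw [Finset.sum_const, nsmul_eq_mul]; ring
      have hg : 0 ≤ g n := by
        nlinarith [hn k hk, Finset.sum_nonneg fun x (_ : x ∈ s n) =>
          measureReal_nonneg (μ := μ) (s := A n k x)]
      refine (measureReal_le_abs_card_filter_mem_sub_le_exp (hA n k) (hind n k) (s n) hlam.le
        (min_le_left _ _) (hn k hk) ?_).trans_eq (by ring_nf)
      nlinarith [mul_le_mul_of_nonneg_right hClam hg]
    have hsummable := ((hsum (lam * t / 2) (by positivity)).mul_left 2)
      |>.of_norm_bounded_eventually_nat
        (hbad.mono fun n hn => by rwa [norm_of_nonneg measureReal_nonneg])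
    filter_upwards [ae_eventually_notMem_of_summable_measureReal hsummable] with ω hω
    filter_upwards [hω] with n hn k hk
    by_contra! hdev
    exact hn (mem_biUnion hk hdev)
  filter_upwards [ae_all_iff.mpr fun j : ℕ => hfixed (1 / (j + 1)) (by positivity)] with ω hω t ht
  obtain ⟨j, hj⟩ := exists_nat_one_div_lt ht
  filter_upwards [hω j] with n hn k hk
  have hdev := hn k hk
  have hg : 0 < g n := pos_of_mul_pos_right ((abs_nonneg _).trans_lt hdev) (by positivity)
  exact hdev.trans_le (by gcongr)

end Chernoff

lemma sum_measureReal_div_mem_Ico {Ω : Type*} [MeasurableSpace Ω] {μ : Measure Ω}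
    [IsFiniteMeasure μ] {τ : ℕ → Ω → ℝ} (hτmeas : ∀ x, Measurable (τ x))
    (hτid : ∀ x, Measure.map (τ x) μ = Measure.map (τ 0) μ) (s : Finset ℕ) {L u H : ℝ}
    (hL : 0 < L) (hH : 0 ≤ H) :
    ∑ x ∈ s, μ.real {ω | τ x ω / L ∈ Ico u (u + H)} =
      s.card * (μ.real {ω | u * L ≤ τ 0 ω} - μ.real {ω | (u + H) * L ≤ τ 0 ω}) := by
  have hset : ∀ x, {ω | τ x ω / L ∈ Ico u (u + H)} = τ x ⁻¹' Ico (u * L) ((u + H) * L) := by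
    intro x; ext ω
    simp only [mem_ofPred_eq, mem_preimage, mem_Ico, le_div_iff₀ hL, div_lt_iff₀ hL]
  have hterm : ∀ x, μ.real {ω | τ x ω / L ∈ Ico u (u + H)} =
      μ.real (τ 0 ⁻¹' Ico (u * L) ((u + H) * L)) := by
    intro x
    rw [hset, ← map_measureReal_apply (hτmeas x) measurableSet_Ico, hτid x,
      map_measureReal_apply (hτmeas 0) measurableSet_Ico]
  simp_rw [hterm, Finset.sum_const, nsmul_eq_mul]
  rw [measureReal_preimage_Ico (hτmeas 0) (by nlinarith)]

theorem ae_eventually_forall_abs_count_sub_mean_lt {Ω : Type*} [MeasurableSpace Ω]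
    {μ : Measure Ω} [IsProbabilityMeasure μ] {τ : ℕ → Ω → ℝ} (hτmeas : ∀ x, Measurable (τ x))
    (hτindep : iIndepFun τ μ) (hτid : ∀ x, Measure.map (τ x) μ = Measure.map (τ 0) μ)
    {α κ ε c : ℝ} (M : ℝ) (hα : 0 ≤ α) (hε : 0 < ε) {h : ℕ → ℝ} (hpos : ∀ n, 0 < h n)
    (hmean : TendstoUniformlyOn (fun (n : ℕ) u => n * (μ.real {ω | u * (n : ℝ) ^ κ ≤ τ 0 ω} -
      μ.real {ω | (u + h n) * (n : ℝ) ^ κ ≤ τ 0 ω}) / (h n * (n : ℝ) ^ c))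
      (fun u => α * u ^ (-α - 1)) atTop (Ici ε))
    (hsum : ∀ b > 0, Summable fun n => ((Finset.Ico ⌈ε / h n⌉ ⌈M / h n⌉).card : ℝ) *
      exp (-b * (h n * (n : ℝ) ^ c))) :
    ∀ᵐ ω ∂μ, ∀ t > 0, ∀ᶠ n in atTop, ∀ k : ℤ, ε ≤ k * h n → k * h n < M →
      |(((Finset.Icc 1 n).filter fun x => τ x ω / (n : ℝ) ^ κ ∈ Ico (k * h n) (k * h n + h n)).card
        : ℝ) - n * (μ.real {ω | k * h n * (n : ℝ) ^ κ ≤ τ 0 ω} -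
          μ.real {ω | (k * h n + h n) * (n : ℝ) ^ κ ≤ τ 0 ω})| < t * (h n * (n : ℝ) ^ c) := by
  have hexpect : ∀ n : ℕ, 0 < n → ∀ u,
      ∑ x ∈ Finset.Icc 1 n, μ.real {ω | τ x ω / (n : ℝ) ^ κ ∈ Ico u (u + h n)} =
        n * (μ.real {ω | u * (n : ℝ) ^ κ ≤ τ 0 ω} -
          μ.real {ω | (u + h n) * (n : ℝ) ^ κ ≤ τ 0 ω}) := fun n hn u => by
    rw [sum_measureReal_div_mem_Ico hτmeas hτid _ (by positivity) (hpos n).le, Nat.card_Icc,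
      Nat.add_sub_cancel]
  have hmean_le := eventually_le_mul_of_tendstoUniformlyOn hmean
    (fun u (hu : ε ≤ u) => mul_le_mul_of_nonneg_left
      (rpow_le_rpow_of_nonpos hε hu (by linarith)) hα)
    ((eventually_gt_atTop 0).mono fun n hn => mul_pos (hpos n) (by positivity))
  have hcount := ae_eventually_forall_abs_card_filter_mem_sub_lt (μ := μ)
    (K := fun n => Finset.Ico ⌈ε / h n⌉ ⌈M / h n⌉) (s := fun n => Finset.Icc 1 n)
    (A := fun n (k : ℤ) x => {ω | τ x ω / (n : ℝ) ^ κ ∈ Ico (k * h n) (k * h n + h n)})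
    (fun n k x => measurableSet_preimage ((hτmeas x).div_const _) measurableSet_Ico)
    (fun n k => hτindep.iIndepSet_preimage (measurable_id.div_const _ measurableSet_Ico))
    (by positivity : 0 < α * ε ^ (-α - 1) + 1) (by
      filter_upwards [hmean_le, eventually_gt_atTop 0] with n hn hn0 k hk
      rw [hexpect n hn0]
      exact hn _ ((mem_Ico_ceil_div_iff (hpos n) k).mp hk).1) hsum
  filter_upwards [hcount] with ω hω t ht
  filter_upwards [hω t ht, eventually_gt_atTop 0] with n hn hn0 k hεk hkM
  rw [← hexpect n hn0]
  exact hn k ((mem_Ico_ceil_div_iff (hpos n) k).mpr ⟨hεk, hkM⟩)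

theorem lln_deep_traps_complete_graph_general
    {Ω₁ : Type*} [MeasurableSpace Ω₁] {μ₁ : Measure Ω₁} [IsProbabilityMeasure μ₁]
    (α κ ε M : ℝ) (hα : α ∈ Set.Ioo (0:ℝ) 1) (hκpos : 0 < κ) (hκ : κ < 1 / α)
    (hε : 0 < ε)
    (τ : ℕ → Ω₁ → ℝ)
    (hτmeas : ∀ x, Measurable (τ x))
    (hτindep : iIndepFun τ μ₁)
    (hτid : ∀ x, Measure.map (τ x) μ₁ = Measure.map (τ 0) μ₁)
    (hτtail : Tendsto (fun u : ℝ => u ^ α * (μ₁ {ω | u ≤ τ 0 ω}).toReal) atTop (nhds 1)) :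
    ∃ h : ℕ → ℝ, (∀ n, 0 < h n) ∧ Tendsto h atTop (nhds 0) ∧
      ∀ᵐ ω ∂μ₁,
        Tendsto (fun n : ℕ =>
          sSup {v : ℝ | ∃ u : ℝ, u ∈ Set.Ico ε M ∧ (∃ k : ℤ, u = k * h n) ∧
            v = |(((Finset.Icc 1 n).filter
                    (fun x => τ x ω / (n : ℝ) ^ κ ∈ Set.Ico u (u + h n))).card : ℝ) /
                  (h n * (n : ℝ) ^ (1 - α * κ)) - α * u ^ (-α - 1)|})
          atTop (nhds 0) := by
  have hc : 0 < 1 - α * κ := by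
    have := (lt_div_iff₀ hα.1).mp hκ; linarith
  set F : ℝ → ℝ := fun s => μ₁.real {ω | s ≤ τ 0 ω}
  obtain ⟨e, he0, he, hF⟩ := exists_tendsto_zero_forall_ge_abs_le
    (f := fun s => s ^ α * F s - 1) (by simpa [F, measureReal_def] using hτtail.sub_const 1)
    (g := fun n : ℕ => ε * (n : ℝ) ^ κ)
    (((tendsto_rpow_atTop hκpos).comp tendsto_natCast_atTop_atTop).const_mul_atTop hε)
  set h := mesh e (1 - α * κ)
  have hmean := tendstoUniformlyOn_mean_count (h := h) hα.1.le hε (mesh_pos e _)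
    (tendsto_mesh he hc) (tendsto_div_mesh he0 he) hF
  refine ⟨h, mesh_pos e _, tendsto_mesh he hc, ?_⟩
  filter_upwards [ae_eventually_forall_abs_count_sub_mean_lt hτmeas hτindep hτid M hα.1.le hε
    (mesh_pos e _) hmean fun b hb => summable_card_Ico_ceil_div_mesh_mul_exp he hc hε.le M hb]
    with ω hω
  refine tendsto_sSup_of_forall_eventually_le
    (fun n => by rintro _ ⟨u, -, -, rfl⟩; exact abs_nonneg _) fun δ hδ => ?_
  filter_upwards [hω (δ / 2) (half_pos hδ),
    Metric.tendstoUniformlyOn_iff.mp hmean (δ / 2) (half_pos hδ), eventually_gt_atTop 0]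
    with n hdev hunif hn
  rintro _ ⟨u, ⟨hεu, huM⟩, ⟨k, rfl⟩, rfl⟩
  have hu := hunif _ hεu
  rw [Real.dist_eq, abs_sub_comm] at hu
  exact (abs_div_sub_lt_add (mul_pos (mesh_pos e _ n) (by positivity)) (hdev k hεu huM)
    hu).le.trans_eq (add_halves δ)

/-- Law of large numbers for the number of deep traps on the complete graph:
with `T_u^v(n) = {x ∈ {1,…,n} : τ_x/n^κ ∈ [u,v)}`, there is `h(n) → 0` such that a.s.
`sup_{u ∈ [ε,M) ∩ ℤ h(n)} | |T_u^{u+h(n)}(n)| / (h(n) n^{1-ακ}) - α u^{-α-1} | → 0`. -/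
theorem lln_deep_traps_complete_graph
    {Ω₁ : Type*} [MeasurableSpace Ω₁] {μ₁ : Measure Ω₁} [IsProbabilityMeasure μ₁]
    (α κ ε M : ℝ) (hα : α ∈ Set.Ioo (0:ℝ) 1) (hκpos : 0 < κ) (hκ : κ < 1 / α)
    (hε : 0 < ε) (hεM : ε < M)
    (τ : ℕ → Ω₁ → ℝ)
    (hτmeas : ∀ x, Measurable (τ x))
    (hτpos : ∀ x, ∀ᵐ ω ∂μ₁, 0 < τ x ω)
    (hτindep : iIndepFun τ μ₁)
    (hτid : ∀ x, Measure.map (τ x) μ₁ = Measure.map (τ 0) μ₁)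
    (hτtail : Tendsto (fun u : ℝ => u ^ α * (μ₁ {ω | u ≤ τ 0 ω}).toReal) atTop (nhds 1)) :
    ∃ h : ℕ → ℝ, (∀ n, 0 < h n) ∧ Tendsto h atTop (nhds 0) ∧
      ∀ᵐ ω ∂μ₁,
        Tendsto (fun n : ℕ =>
          sSup {v : ℝ | ∃ u : ℝ, u ∈ Set.Ico ε M ∧ (∃ k : ℤ, u = k * h n) ∧
            v = |(((Finset.Icc 1 n).filter
                    (fun x => τ x ω / (n : ℝ) ^ κ ∈ Set.Ico u (u + h n))).card : ℝ) /
                  (h n * (n : ℝ) ^ (1 - α * κ)) - α * u ^ (-α - 1)|})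
          atTop (nhds 0) :=
  lln_deep_traps_complete_graph_general α κ ε M hα hκpos hκ hε τ hτmeas hτindep hτid hτtail
end

section
/- Random clouds on the hypercube satisfy the minimal distance condition: Let γ ∈ (3/4,1) and ρ ∈ (0,∞), and for each n let A_n ⊂ {−1,1}^n be a random cloud with intensity ρ_n (each vertex belongs to A_n independently with probability ρ_n), where lim_{n→∞} ρ_n 2^{γn} = ρ. Then almost surely the assumptions of the hitting-time proposition hold for all n large enough: there exists ε > 0 such that min{d(x,y) : x,y ∈ A_n, x ≠ y} ≥ (ω(γ)+ε)n, where ω(γ) is the unique solution ω ∈ (0,1/2) of ω log ω + (1−ω) log(1−ω) + log 2 = (2γ−1) log 2, and |A_n|/(ρ_n 2^n) → 1. -/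
/-!
Choose `α` slightly above `ω(γ)` with `2 e^{H(α)} < 2^{2γ}`, where `H` is the binary entropy in
nats; this is possible because `H(ω(γ)) = (2 - 2γ) log 2`, which is below `(2γ - 1) log 2`
exactly when `γ > 3/4`. At most `2ⁿ e^{n H(α)}` ordered pairs of vertices are within distance
`αn`, and a given pair of distinct vertices lies in `A_n` with probability `ρ_n²`, so the
probability that `A_n` has a close pair is `O((2 e^{H(α)} 2^{-2γ})ⁿ)`, which is summable.
Chebyshev's inequality bounds the probability that `|A_n|` deviates from `ρ_n 2ⁿ` by a fixed
fraction `δ` of it by `1 / (δ² ρ_n 2ⁿ) = O(2^{(γ-1)n})`, again summable. Borel–Cantelli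
turns both bounds into almost sure statements for all large `n`.
-/

open MeasureTheory ProbabilityTheory Filter Set
open scoped Topology

open Finset in
lemma card_hammingDist_le_le {ι : Type*} [Fintype ι] [DecidableEq ι] (x : ι → Bool)
    (m : ℕ) :
    #{y | hammingDist x y ≤ m} ≤ ∑ k ∈ range (m + 1), (Fintype.card ι).choose k := by
  let diff : (ι → Bool) → Finset ι := fun y => {i | x i ≠ y i}
  have hmaps : ∀ y ∈ ({y | hammingDist x y ≤ m} : Finset (ι → Bool)),
      diff y ∈ (range (m + 1)).biUnion fun k => powersetCard k univ := fun y hy =>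
    mem_biUnion.mpr ⟨_, Finset.mem_range.mpr (Nat.lt_succ_of_le (mem_filter.mp hy).2),
      mem_powersetCard_univ.mpr rfl⟩
  have hinj : Set.InjOn diff ({y | hammingDist x y ≤ m} : Finset (ι → Bool)) := by
    intro y _ z _ hyz
    funext i
    have := congrArg (i ∈ ·) hyz
    simp only [diff, mem_filter, Finset.mem_univ, true_and, eq_iff_iff] at this
    revert this; cases x i <;> cases y i <;> cases z i <;> simp
  calc _ ≤ #((range (m + 1)).biUnion fun k => powersetCard k (univ : Finset ι)) :=
        card_le_card_of_injOn diff hmaps hinj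
    _ ≤ _ := card_biUnion_le.trans_eq (by simp [card_powersetCard])

open Finset in
lemma card_pairs_hammingDist_le_le {ι : Type*} [Fintype ι] [DecidableEq ι] (m : ℕ) :
    #{p : (ι → Bool) × (ι → Bool) | hammingDist p.1 p.2 ≤ m} ≤
      2 ^ Fintype.card ι * ∑ k ∈ range (m + 1), (Fintype.card ι).choose k := by
  rw [card_filter, Fintype.sum_prod_type]
  simp only [← card_filter]
  calc _ ≤ ∑ _x : ι → Bool, ∑ k ∈ range (m + 1), (Fintype.card ι).choose k :=
        sum_le_sum fun x _ => card_hammingDist_le_le x m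
    _ = _ := by simp

namespace Real

lemma exists_gt_binEntropy_lt {ω c : ℝ} (hω : ω < 1 / 2) (h : binEntropy ω < c) :
    ∃ α, ω < α ∧ α ≤ 1 / 2 ∧ binEntropy α < c := by
  have hright : ∀ᶠ α in 𝓝[>] ω, α ∈ Ioo ω (1 / 2) := Ioo_mem_nhdsGT hω
  have hnear : ∀ᶠ α in 𝓝[>] ω, binEntropy α < c :=
    nhdsWithin_le_nhds (binEntropy_continuous.continuousAt.eventually (gt_mem_nhds h))
  obtain ⟨α, ⟨hωα, hα⟩, hαc⟩ := (hright.and hnear).exists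
  exact ⟨α, hωα, hα.le, hαc⟩

lemma pow_mul_one_sub_pow_le_of_le {α : ℝ} (hα0 : 0 ≤ α) (hα : α ≤ 1 / 2) {k m n : ℕ}
    (hkm : k ≤ m) (hmn : m ≤ n) :
    α ^ m * (1 - α) ^ (n - m) ≤ α ^ k * (1 - α) ^ (n - k) := by
  have hsplit : n - k = (m - k) + (n - m) := by omega
  calc α ^ m * (1 - α) ^ (n - m) = α ^ k * α ^ (m - k) * (1 - α) ^ (n - m) := by
        rw [← pow_add, Nat.add_sub_cancel' hkm]
    _ ≤ α ^ k * (1 - α) ^ (m - k) * (1 - α) ^ (n - m) := by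
        have : 0 ≤ 1 - α := by linarith
        gcongr
        linarith
    _ = α ^ k * (1 - α) ^ (n - k) := by rw [hsplit, pow_add, mul_assoc]

lemma exp_neg_mul_binEntropy_le {α : ℝ} (hα0 : 0 < α) (hα : α ≤ 1 / 2) {m n : ℕ}
    (hmn : m ≤ n) (hm : (m : ℝ) ≤ α * n) :
    exp (-(n * binEntropy α)) ≤ α ^ m * (1 - α) ^ (n - m) := by
  have hα1 : 0 < 1 - α := by linarith
  have hlog : log α ≤ log (1 - α) := log_le_log hα0 (by linarith)
  rw [← exp_log (by positivity : 0 < α ^ m * (1 - α) ^ (n - m)), exp_le_exp,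
    log_mul (by positivity) (by positivity), log_pow, log_pow, Nat.cast_sub hmn, binEntropy,
    log_inv, log_inv]
  nlinarith [mul_le_mul_of_nonneg_right hm (sub_nonneg.mpr hlog)]

theorem sum_range_choose_le_exp_mul_binEntropy {α : ℝ} (hα0 : 0 < α) (hα : α ≤ 1 / 2)
    {m n : ℕ} (hm : (m : ℝ) ≤ α * n) :
    ∑ k ∈ Finset.range (m + 1), (n.choose k : ℝ) ≤ exp (n * binEntropy α) := by
  have hmn : m ≤ n := by
    have : (m : ℝ) ≤ n := hm.trans (mul_le_of_le_one_left (by positivity) (by linarith))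
    exact_mod_cast this
  have hbinom :
      ∑ k ∈ Finset.range (n + 1), α ^ k * (1 - α) ^ (n - k) * (n.choose k : ℝ) = 1 := by
    rw [← add_pow]; simp
  -- Every term with `k ≤ m` has binomial weight at least `α ^ m * (1 - α) ^ (n - m)`.
  have hweighted : (∑ k ∈ Finset.range (m + 1), (n.choose k : ℝ)) *
      (α ^ m * (1 - α) ^ (n - m)) ≤ 1 := by
    rw [Finset.sum_mul]
    calc _ ≤ ∑ k ∈ Finset.range (m + 1), α ^ k * (1 - α) ^ (n - k) * (n.choose k : ℝ) :=
          Finset.sum_le_sum fun k hk => by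
            rw [mul_comm (α ^ k * _)]
            exact mul_le_mul_of_nonneg_left (pow_mul_one_sub_pow_le_of_le hα0.le hα
              (by simpa [Nat.lt_succ_iff] using hk) hmn) (Nat.cast_nonneg _)
      _ ≤ ∑ k ∈ Finset.range (n + 1), α ^ k * (1 - α) ^ (n - k) * (n.choose k : ℝ) := by
          have : 0 ≤ 1 - α := by linarith
          exact Finset.sum_le_sum_of_subset_of_nonneg (by simpa using hmn)
            fun _ _ _ => by positivity
      _ = 1 := hbinom
  calc _ = (∑ k ∈ Finset.range (m + 1), (n.choose k : ℝ)) * exp (-(n * binEntropy α)) *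
        exp (n * binEntropy α) := by
          rw [mul_assoc, ← exp_add, neg_add_cancel, exp_zero, mul_one]
    _ ≤ 1 * exp (n * binEntropy α) := by
        gcongr
        exact (mul_le_mul_of_nonneg_left (exp_neg_mul_binEntropy_le hα0 hα hmn hm)
          (by positivity)).trans hweighted
    _ = _ := one_mul _

end Real

lemma ae_eventually_notMem_of_summable {Ω : Type*} [MeasurableSpace Ω] {μ : Measure Ω}
    {s : ℕ → Set Ω} {a : ℕ → ℝ} (ha : Summable a)
    (h : ∀ n, μ (s n) ≤ ENNReal.ofReal (a n)) :
    ∀ᵐ ω ∂μ, ∀ᶠ n in atTop, ω ∉ s n :=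
  ae_eventually_notMem (ne_top_of_le_ne_top ha.tsum_ofReal_ne_top (ENNReal.tsum_le_tsum h))

section BernoulliFamily

variable {Ω ι : Type*} [MeasurableSpace Ω] {μ : Measure Ω} {f : ι → Ω → Bool} {p : ℝ}

lemma measure_exists_pair_le (hindep : Pairwise fun i j => IndepFun (f i) (f j) μ)
    (hp : 0 ≤ p) (hBern : ∀ i, μ {ω | f i ω = true} = ENNReal.ofReal p)
    (P : Finset (ι × ι)) (hP : ∀ q ∈ P, q.1 ≠ q.2) :
    μ {ω | ∃ q ∈ P, f q.1 ω = true ∧ f q.2 ω = true} ≤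
      ENNReal.ofReal (P.card * p ^ 2) := by
  have hpair : ∀ q ∈ P,
      μ ({ω | f q.1 ω = true} ∩ {ω | f q.2 ω = true}) = ENNReal.ofReal (p ^ 2) := by
    intro q hq
    have h := (hindep (hP q hq)).measure_inter_preimage_eq_mul {true} {true} trivial trivial
    simp only [preimage, mem_singleton_iff] at h
    rw [h, hBern, hBern, ← ENNReal.ofReal_mul hp, sq]
  calc μ {ω | ∃ q ∈ P, f q.1 ω = true ∧ f q.2 ω = true}
      = μ (⋃ q ∈ P, {ω | f q.1 ω = true} ∩ {ω | f q.2 ω = true}) := by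
        congr 1; ext ω; simp only [mem_ofPred_eq, mem_iUnion, mem_inter_iff, exists_prop]
    _ ≤ ∑ q ∈ P, μ ({ω | f q.1 ω = true} ∩ {ω | f q.2 ω = true}) :=
        measure_biUnion_finset_le _ _
    _ = P.card * ENNReal.ofReal (p ^ 2) := by rw [Finset.sum_congr rfl hpair]; simp
    _ = ENNReal.ofReal (P.card * p ^ 2) := by
        rw [ENNReal.ofReal_mul (Nat.cast_nonneg _), ENNReal.ofReal_natCast]

lemma meas_le_abs_card_filter_sub_le [Fintype ι] [IsProbabilityMeasure μ]
    (hmeas : ∀ i, Measurable (f i)) (hindep : Pairwise fun i j => IndepFun (f i) (f j) μ)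
    (hp : 0 ≤ p)
    (hBern : ∀ i, μ {ω | f i ω = true} = ENNReal.ofReal p) {c : ℝ} (hc : 0 < c) :
    μ {ω | c ≤ |((Finset.univ.filter fun i => f i ω = true).card : ℝ) - Fintype.card ι * p|}
      ≤ ENNReal.ofReal (Fintype.card ι * p / c ^ 2) := by
  let φ : Bool → ℝ := fun b => if b = true then 1 else 0
  let X : ι → Ω → ℝ := fun i => φ ∘ f i
  have hX : ∀ i, X i = {ω | f i ω = true}.indicator 1 := fun i => by
    ext ω; simp [X, φ, Set.indicator_apply]
  have hXset : ∀ i, MeasurableSet {ω | f i ω = true} := fun i =>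
    hmeas i (measurableSet_singleton _)
  have hXmeas : ∀ i, Measurable (X i) := fun i => by
    rw [hX]; exact measurable_one.indicator (hXset i)
  have hXL2 : ∀ i, MemLp (X i) 2 μ := fun i =>
    MemLp.of_bound (hXmeas i).aestronglyMeasurable 1 (ae_of_all _ fun ω => by
      by_cases h : f i ω = true <;> simp [X, φ, h])
  have hXmean : ∀ i, μ[X i] = p := fun i => by
    rw [hX, integral_indicator_one (hXset i), measureReal_def, hBern, ENNReal.toReal_ofReal hp]
  have hXvar : ∀ i, variance (X i) μ ≤ p := fun i => by
    have hsq : ∀ ω, X i ω ^ 2 = X i ω := fun ω => by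
      by_cases h : f i ω = true <;> simp [X, φ, h]
    calc variance (X i) μ ≤ μ[X i ^ 2] :=
          variance_le_expectation_sq (hXmeas i).aestronglyMeasurable
      _ = p := by simp only [Pi.pow_apply, hsq, hXmean]
  let S : Ω → ℝ := ∑ i, X i
  have hSeq : ∀ ω, S ω = ((Finset.univ.filter fun i => f i ω = true).card : ℝ) :=
    fun ω => by
    simp only [S, X, φ, Function.comp_apply, Finset.sum_apply, Finset.sum_boole]
  have hSL2 : MemLp S 2 μ := memLp_finsetSum' _ fun i _ => hXL2 i
  have hSmean : μ[S] = Fintype.card ι * p := by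
    simp only [S, Finset.sum_apply]
    rw [integral_finsetSum _ fun i _ => (hXL2 i).integrable one_le_two]
    simp [hXmean]
  have hSvar : variance S μ ≤ Fintype.card ι * p := by
    rw [IndepFun.variance_sum (fun i _ => hXL2 i) fun i _ j _ hij =>
      (hindep hij).comp measurable_from_top measurable_from_top]
    simpa using Finset.sum_le_sum fun i (_ : i ∈ Finset.univ) => hXvar i
  calc _ = μ {ω | c ≤ |S ω - μ[S]|} := by rw [hSmean]; simp only [hSeq]
    _ ≤ ENNReal.ofReal (variance S μ / c ^ 2) := meas_ge_le_variance_div_sq hSL2 hc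
    _ ≤ _ := ENNReal.ofReal_le_ofReal (by gcongr)

end BernoulliFamily

section Asymptotics

variable {a : ℕ → ℝ} {q c L : ℝ}

lemma summable_pow_mul_sq_of_tendsto (hc : 0 ≤ c) (hcq : c < q ^ 2)
    (h : Tendsto (fun n => a n * q ^ n) atTop (𝓝 L)) : Summable fun n => c ^ n * a n ^ 2 := by
  obtain ⟨M, hM⟩ := (h.pow 2).bddAbove_range
  have hq : q ≠ 0 := by rintro rfl; linarith
  refine Summable.of_nonneg_of_le (fun n => by positivity) (fun n => ?_)
    ((summable_geometric_of_lt_one (by positivity)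
      ((div_lt_one (by positivity)).2 hcq)).mul_left M)
  calc c ^ n * a n ^ 2 = (a n * q ^ n) ^ 2 * (c / q ^ 2) ^ n := by
        rw [mul_pow, div_pow, ← pow_mul, ← pow_mul, mul_comm n 2]; field_simp
    _ ≤ M * (c / q ^ 2) ^ n := by gcongr; exact hM ⟨n, rfl⟩

lemma summable_inv_pow_mul_of_tendsto (hq : 0 < q) (hqc : q < c) (hL : L ≠ 0)
    (h : Tendsto (fun n => a n * q ^ n) atTop (𝓝 L)) : Summable fun n => (c ^ n * a n)⁻¹ := by
  obtain ⟨M, hM⟩ := (h.inv₀ hL).norm.bddAbove_range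
  have hc : 0 < c := hq.trans hqc
  refine Summable.of_norm_bounded
    ((summable_geometric_of_lt_one (by positivity) ((div_lt_one hc).2 hqc)).mul_left M)
    (fun n => ?_)
  calc ‖(c ^ n * a n)⁻¹‖ = ‖(a n * q ^ n)⁻¹‖ * (q / c) ^ n := by
        rw [norm_inv, norm_inv, norm_mul, norm_mul, norm_pow, norm_pow, Real.norm_of_nonneg hq.le,
          Real.norm_of_nonneg hc.le, div_pow]
        field_simp
    _ ≤ M * (q / c) ^ n := by gcongr; exact hM ⟨n, rfl⟩

end Asymptotics

section RandomCloud

variable {Ω : Type*} [MeasurableSpace Ω] {μ : Measure Ω}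

open Real in
lemma ae_eventually_lt_hammingDist {B : ∀ n : ℕ, (Fin n → Bool) → Ω → Bool}
    (hindep : ∀ n, Pairwise fun x y => IndepFun (B n x) (B n y) μ) {p : ℕ → ℝ}
    (hp : ∀ n, 0 ≤ p n) (hBern : ∀ n x, μ {ω | B n x ω = true} = ENNReal.ofReal (p n))
    {α : ℝ} (hα0 : 0 < α) (hα : α ≤ 1 / 2)
    (hsum : Summable fun n => (2 * exp (binEntropy α)) ^ n * p n ^ 2) :
    ∀ᵐ ω ∂μ, ∀ᶠ n in atTop, ∀ x y : Fin n → Bool,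
      B n x ω = true → B n y ω = true → x ≠ y → α * n < hammingDist x y := by
  let P : ∀ n : ℕ, Finset ((Fin n → Bool) × (Fin n → Bool)) := fun n =>
    {q | q.1 ≠ q.2 ∧ hammingDist q.1 q.2 ≤ ⌊α * n⌋₊}
  have hcard : ∀ n, ((P n).card : ℝ) ≤ (2 * exp (binEntropy α)) ^ n := fun n => by
    have hsub : (P n).card ≤ (Finset.univ.filter fun q : (Fin n → Bool) × (Fin n → Bool) =>
        hammingDist q.1 q.2 ≤ ⌊α * n⌋₊).card :=
      Finset.card_le_card (Finset.monotone_filter_right _ fun _ _ hq => hq.2)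
    have hpairs :
        (P n).card ≤ 2 ^ n * ∑ k ∈ Finset.range (⌊α * n⌋₊ + 1), n.choose k := by
      simpa only [Fintype.card_fin] using hsub.trans (card_pairs_hammingDist_le_le _)
    calc ((P n).card : ℝ)
        ≤ 2 ^ n * ∑ k ∈ Finset.range (⌊α * n⌋₊ + 1), (n.choose k : ℝ) := by
          exact_mod_cast hpairs
      _ ≤ 2 ^ n * exp (n * binEntropy α) := by
          gcongr
          exact sum_range_choose_le_exp_mul_binEntropy hα0 hα (Nat.floor_le (by positivity))
      _ = _ := by rw [exp_nat_mul, mul_pow]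
  have hbad : ∀ n, μ {ω | ∃ q ∈ P n, B n q.1 ω = true ∧ B n q.2 ω = true} ≤
      ENNReal.ofReal ((2 * exp (binEntropy α)) ^ n * p n ^ 2) := fun n =>
    (measure_exists_pair_le (hindep n) (hp n) (hBern n) (P n)
      fun q hq => (Finset.mem_filter.1 hq).2.1).trans
        (ENNReal.ofReal_le_ofReal (by gcongr; exact hcard n))
  filter_upwards [ae_eventually_notMem_of_summable hsum hbad] with ω hω
  refine hω.mono fun n hn x y hx hy hxy => ?_
  by_contra! hle
  exact hn ⟨(x, y), Finset.mem_filter.2 ⟨Finset.mem_univ _, hxy, Nat.le_floor hle⟩, hx, hy⟩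

lemma ae_tendsto_card_filter_div [IsProbabilityMeasure μ] {ι : ℕ → Type*}
    [∀ n, Fintype (ι n)] [∀ n, Nonempty (ι n)] {f : ∀ n, ι n → Ω → Bool}
    (hmeas : ∀ n i, Measurable (f n i))
    (hindep : ∀ n, Pairwise fun i j => IndepFun (f n i) (f n j) μ) {p : ℕ → ℝ}
    (hp : ∀ n, 0 < p n) (hBern : ∀ n i, μ {ω | f n i ω = true} = ENNReal.ofReal (p n))
    (hsum : Summable fun n => (Fintype.card (ι n) * p n)⁻¹) :
    ∀ᵐ ω ∂μ, Tendsto (fun n => ((Finset.univ.filter fun i => f n i ω = true).card : ℝ) /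
      (Fintype.card (ι n) * p n)) atTop (𝓝 1) := by
  have hN : ∀ n, 0 < (Fintype.card (ι n) : ℝ) * p n := fun n => by
    have := hp n; positivity
  have hdev : ∀ k : ℕ, ∀ᵐ ω ∂μ, ∀ᶠ n in atTop,
      ¬ ((k + 1 : ℝ)⁻¹ * (Fintype.card (ι n) * p n) ≤
        |((Finset.univ.filter fun i => f n i ω = true).card : ℝ) - Fintype.card (ι n) * p n|) :=
    fun k => ae_eventually_notMem_of_summable (hsum.mul_left ((k + 1 : ℝ) ^ 2)) fun n =>
      (meas_le_abs_card_filter_sub_le (hmeas n) (hindep n) (hp n).le (hBern n)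
        (by have := hN n; positivity)).trans_eq (by congr 1; field_simp)
  filter_upwards [ae_all_iff.2 hdev] with ω hω
  refine Metric.tendsto_nhds.2 fun e he => ?_
  obtain ⟨k, hk⟩ := exists_nat_one_div_lt he
  refine (hω k).mono fun n hn => ?_
  rw [not_le] at hn
  rw [Real.dist_eq, div_sub_one (hN n).ne', abs_div, abs_of_pos (hN n), div_lt_iff₀ (hN n)]
  calc _ < (k + 1 : ℝ)⁻¹ * (Fintype.card (ι n) * p n) := hn
    _ ≤ e * (Fintype.card (ι n) * p n) :=
        mul_le_mul_of_nonneg_right (by simpa using hk.le) (hN n).le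

end RandomCloud

open Real in
/-- Random clouds on the hypercube satisfy the minimal distance condition:
for `γ ∈ (3/4,1)` and Bernoulli(ρ_n) random clouds `A_n ⊂ {-1,1}^n` with
`ρ_n 2^{γn} → ρ ∈ (0,∞)`, almost surely there is `ε > 0` such that for all large `n`
any two distinct points of `A_n` are at Hamming distance at least `(ω(γ)+ε)n`, and
`|A_n|/(ρ_n 2^n) → 1`. -/
theorem hypercube_random_cloud_minimal_distance
    {Ω : Type*} [MeasurableSpace Ω] {μ : Measure Ω} [IsProbabilityMeasure μ]
    (γ ρ : ℝ) (hγ : γ ∈ Set.Ioo (3/4 : ℝ) 1) (hρ : 0 < ρ)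
    (ρseq : ℕ → ℝ) (hρseqpos : ∀ n, 0 < ρseq n)
    (hρseq : Tendsto (fun n : ℕ => ρseq n * (2 : ℝ) ^ (γ * n)) atTop (nhds ρ))
    -- the random cloud: each vertex belongs to `A_n` independently with probability `ρ_n`
    (B : ∀ n : ℕ, (Fin n → Bool) → Ω → Bool)
    (hBmeas : ∀ n x, Measurable (B n x))
    (hBindep : iIndepFun
      (fun p : (Σ n : ℕ, Fin n → Bool) => B p.1 p.2) μ)
    (hBern : ∀ n x, μ {ω | B n x ω = true} = ENNReal.ofReal (ρseq n))
    -- ω(γ) : the unique solution in (0,1/2) of the entropy equation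
    (ωγ : ℝ) (hωγ : ωγ ∈ Set.Ioo (0:ℝ) (1/2))
    (hωγeq : ωγ * Real.log ωγ + (1 - ωγ) * Real.log (1 - ωγ) + Real.log 2 =
      (2 * γ - 1) * Real.log 2) :
    ∀ᵐ ω ∂μ,
      (∃ ε : ℝ, 0 < ε ∧ ∀ᶠ n : ℕ in atTop, ∀ x y : Fin n → Bool,
        B n x ω = true → B n y ω = true → x ≠ y → (ωγ + ε) * n ≤ hammingDist x y) ∧
      Tendsto (fun n : ℕ =>
          ((Finset.univ.filter (fun x : Fin n → Bool => B n x ω = true)).card : ℝ) /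
            (ρseq n * 2 ^ n))
        atTop (nhds 1) := by
  obtain ⟨hγ34, hγ1⟩ := hγ
  obtain ⟨hω0, hω⟩ := hωγ
  set q : ℝ := 2 ^ γ
  have hq : 0 < q := by positivity
  have hρq : Tendsto (fun n : ℕ => ρseq n * q ^ n) atTop (𝓝 ρ) := by
    simpa [q, ← rpow_mul_natCast] using hρseq
  have hentropy : binEntropy ωγ < log (q ^ 2 / 2) := by
    rw [log_div (by positivity) two_ne_zero, log_pow, log_rpow two_pos, binEntropy, log_inv,
      log_inv, Nat.cast_ofNat]
    nlinarith [mul_pos (sub_pos.2 hγ34) (log_pos one_lt_two)]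
  obtain ⟨α, hωα, hα, hαH⟩ := exists_gt_binEntropy_lt hω hentropy
  have hindep : ∀ n, Pairwise fun x y => IndepFun (B n x) (B n y) μ :=
    fun n x y hxy => hBindep.indepFun (i := ⟨n, x⟩) (j := ⟨n, y⟩) (by simpa using hxy)
  have hclose := ae_eventually_lt_hammingDist hindep (fun n => (hρseqpos n).le) hBern
    (hω0.trans hωα) hα (summable_pow_mul_sq_of_tendsto (by positivity)
      (by linarith [(lt_log_iff_exp_lt (by positivity)).1 hαH]) hρq)
  have hcount := ae_tendsto_card_filter_div hBmeas hindep hρseqpos hBern (by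
    simpa using summable_inv_pow_mul_of_tendsto hq
      (by simpa [q] using rpow_lt_rpow_of_exponent_lt one_lt_two hγ1) hρ.ne' hρq)
  filter_upwards [hclose, hcount] with ω hclose hcount
  refine ⟨⟨α - ωγ, by linarith, hclose.mono fun n hn x y hx hy hxy => ?_⟩, ?_⟩
  · rw [add_sub_cancel]; exact (hn x y hx hy hxy).le
  · simpa [mul_comm] using hcount
end
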